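/- arXiv:2306.00702 — 2 statements merged into one kernel-verified Lean document; each statement's English description precedes it below -/
import Mathlib

section
/- For fully assigned (or fully unassigned) mixed-free 1D crease patterns in the all-layers model, valid folds may be performed in any order: if the crease pattern is completely foldable by some sequence of valid all-layers folds, then any valid all-layers fold can be performed first and the resulting reduced crease pattern is still completely foldable. -/
/-- A mixed 1D crease pattern: paper `[0, L]` with creases
`c 0 < ⋯ < c (n-1)` strictly inside the paper, each assigned mountain
(`some true`), valley (`some false`), or unassigned (`none`). -/
structure MixedPattern where
  L : ℝ
  n : ℕ
  c : Fin n → ℝ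
  mono : StrictMono c
  pos : ∀ i, 0 < c i
  lt_len : ∀ i, c i < L
  asg : Fin n → Option Bool

/-- Two crease labels are compatible when glued by a fold (which flips one of
them): they must not be both mountain nor both valley. -/
def Compatible (x y : Option Bool) : Prop := ∀ b : Bool, ¬ (x = some b ∧ y = some b)

namespace MixedPattern

variable (P : MixedPattern)

/-- Distance from crease `k` to the nearest end of the paper. -/
noncomputable def distToEnd (k : Fin P.n) : ℝ := min (P.c k) (P.L - P.c k)

/-- An all-layers simple fold at crease `k` is *valid* if every other crease
within the overlap region (distance less than `distToEnd k` from `k`) is glued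
exactly onto a mirror crease with compatible assignment; creases outside the
overlap land off the paper or on an end. -/
def ValidFold (k : Fin P.n) : Prop :=
  ∀ i : Fin P.n, i ≠ k → |P.c i - P.c k| < P.distToEnd k →
    ∃ j : Fin P.n, j ≠ k ∧ P.c j = 2 * P.c k - P.c i ∧
      Compatible (P.asg i) (P.asg j)

/-- Crease `k` is *plausible* if, ignoring assignments, the crease positions
are symmetric about `k` within the distance from `k` to the nearest end. -/
def Plausible (k : Fin P.n) : Prop :=
  ∀ i : Fin P.n, |P.c i - P.c k| < P.distToEnd k →
    ∃ j : Fin P.n, P.c j = 2 * P.c k - P.c i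

/-- `P'` is the reduced mixed pattern resulting from a valid all-layers fold
of `P` at crease `k`: the shorter side is reflected onto the longer side and
glued; the remaining creases are those of the longer side (re-coordinatized so
the paper starts at `0`), where a crease receiving a reflected assigned crease
becomes assigned to the flipped label, and all other creases keep their
labels. -/
def IsFoldResult (k : Fin P.n) (P' : MixedPattern) : Prop :=
  ( -- the left side is (nonstrictly) shorter and is reflected to the right
    P.c k ≤ P.L - P.c k ∧
    P'.L = P.L - P.c k ∧
    P'.n + ((k : ℕ) + 1) = P.n ∧
    ∀ j : Fin P'.n, ∃ j' : Fin P.n, (k : ℕ) < (j' : ℕ) ∧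
      P'.c j = P.c j' - P.c k ∧
      (∀ i : Fin P.n, ∀ b : Bool, (i : ℕ) < (k : ℕ) →
        2 * P.c k - P.c i = P.c j' → P.asg i = some b → P'.asg j = some (!b)) ∧
      ((∀ i : Fin P.n, (i : ℕ) < (k : ℕ) → 2 * P.c k - P.c i = P.c j' →
        P.asg i = none) → P'.asg j = P.asg j')) ∨
  ( -- the right side is (nonstrictly) shorter and is reflected to the left
    P.L - P.c k ≤ P.c k ∧
    P'.L = P.c k ∧
    P'.n = (k : ℕ) ∧
    ∀ j : Fin P'.n, ∃ j' : Fin P.n, (j' : ℕ) < (k : ℕ) ∧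
      P'.c j = P.c j' ∧
      (∀ i : Fin P.n, ∀ b : Bool, (k : ℕ) < (i : ℕ) →
        2 * P.c k - P.c i = P.c j' → P.asg i = some b → P'.asg j = some (!b)) ∧
      ((∀ i : Fin P.n, (k : ℕ) < (i : ℕ) → 2 * P.c k - P.c i = P.c j' →
        P.asg i = none) → P'.asg j = P.asg j'))

end MixedPattern

/-- A mixed 1D crease pattern can be completely folded by a sequence of valid
all-layers simple folds. -/
inductive CompletelyFoldable : MixedPattern → Prop
  | nil (P : MixedPattern) (h : P.n = 0) : CompletelyFoldable P
  | fold (P : MixedPattern) (k : Fin P.n) (P' : MixedPattern)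
      (hv : P.ValidFold k) (hr : P.IsFoldResult k P')
      (h' : CompletelyFoldable P') : CompletelyFoldable P

namespace MixedPattern

variable (P : MixedPattern)

section Excerpt

variable (s t : ℝ)

noncomputable def exS : Finset (Fin P.n) :=
  Finset.univ.filter (fun i : Fin P.n => s < P.c i ∧ P.c i < t)

noncomputable def exIso : Fin (P.exS s t).card ≃o {x // x ∈ P.exS s t} :=
  (P.exS s t).orderIsoOfFin rfl

noncomputable def excerpt : MixedPattern where
  L := t - s
  n := (P.exS s t).card
  c := fun j => P.c (P.exIso s t j) - s
  mono := by
    intro j₁ j₂ h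
    have h2 : (P.exIso s t j₁ : Fin P.n) < (P.exIso s t j₂ : Fin P.n) :=
      (P.exIso s t).strictMono h
    exact sub_lt_sub_right (P.mono h2) s
  pos := by
    intro j
    show 0 < P.c (P.exIso s t j) - s
    have := (P.exIso s t j).2
    simp only [exS, Finset.mem_filter] at this
    exact sub_pos.mpr this.2.1
  lt_len := by
    intro j
    show P.c (P.exIso s t j) - s < t - s
    have := (P.exIso s t j).2
    simp only [exS, Finset.mem_filter] at this
    exact sub_lt_sub_right this.2.2 s
  asg := fun j => P.asg (P.exIso s t j)

lemma excerpt_spec (j : Fin (P.excerpt s t).n) :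
    ∃ i : Fin P.n, s < P.c i ∧ P.c i < t ∧ (P.excerpt s t).c j = P.c i - s ∧
      (P.excerpt s t).asg j = P.asg i := by
  refine ⟨P.exIso s t j, ?_, ?_, rfl, rfl⟩ <;>
  · have := (P.exIso s t j).2
    simp only [exS, Finset.mem_filter] at this
    tauto

lemma excerpt_surj (i : Fin P.n) (h1 : s < P.c i) (h2 : P.c i < t) :
    ∃ j : Fin (P.excerpt s t).n, (P.excerpt s t).c j = P.c i - s ∧
      (P.excerpt s t).asg j = P.asg i := by
  have hmem : i ∈ P.exS s t := by simp [exS, h1, h2]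
  refine ⟨(P.exIso s t).symm ⟨i, hmem⟩, ?_, ?_⟩
  · show P.c (P.exIso s t ((P.exIso s t).symm ⟨i, hmem⟩)) - s = P.c i - s
    rw [OrderIso.apply_symm_apply]
  · show P.asg (P.exIso s t ((P.exIso s t).symm ⟨i, hmem⟩)) = P.asg i
    rw [OrderIso.apply_symm_apply]

@[simp] lemma excerpt_L : (P.excerpt s t).L = t - s := rfl

end Excerpt

end MixedPattern

namespace MixedPattern

lemma ext' {A B : MixedPattern} (hL : A.L = B.L) (hn : A.n = B.n)
    (hc : ∀ j : Fin A.n, A.c j = B.c (Fin.cast hn j))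
    (ha : ∀ j : Fin A.n, A.asg j = B.asg (Fin.cast hn j)) : A = B := by
  obtain ⟨L1, n1, c1, m1, p1, l1, a1⟩ := A
  obtain ⟨L2, n2, c2, m2, p2, l2, a2⟩ := B
  dsimp at hL hn hc ha
  subst hL hn
  have hc' : c1 = c2 := funext fun j => by simpa using hc j
  have ha' : a1 = a2 := funext fun j => by simpa using ha j
  subst hc' ha'
  rfl

lemma cinj (P : MixedPattern) : Function.Injective P.c := P.mono.injective

lemma eq_excerpt {P : MixedPattern} {s t : ℝ} (X : MixedPattern)
    (hL : X.L = t - s)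
    (hfwd : ∀ j : Fin X.n, ∃ i : Fin P.n, s < P.c i ∧ P.c i < t ∧
      X.c j = P.c i - s ∧ X.asg j = P.asg i)
    (hbwd : ∀ i : Fin P.n, s < P.c i → P.c i < t →
      ∃ j : Fin X.n, X.c j = P.c i - s) :
    X = P.excerpt s t := by
  have hf : ∀ j : Fin X.n, ∃ j' : Fin (P.excerpt s t).n, (P.excerpt s t).c j' = X.c j := by
    intro j
    obtain ⟨i, h1, h2, h3, _⟩ := hfwd j
    obtain ⟨j', hj', _⟩ := P.excerpt_surj s t i h1 h2
    exact ⟨j', by rw [hj', h3]⟩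
  have hg : ∀ j' : Fin (P.excerpt s t).n, ∃ j : Fin X.n, X.c j = (P.excerpt s t).c j' := by
    intro j'
    obtain ⟨i, h1, h2, h3, _⟩ := P.excerpt_spec s t j'
    obtain ⟨j, hj⟩ := hbwd i h1 h2
    exact ⟨j, by rw [hj, h3]⟩
  have hn : X.n = (P.excerpt s t).n := by
    have i1 : Function.Injective (fun j : Fin X.n => (hf j).choose) := by
      intro j1 j2 h
      apply X.cinj
      rw [← (hf j1).choose_spec, ← (hf j2).choose_spec]
      exact congrArg (P.excerpt s t).c h
    have i2 : Function.Injective (fun j' : Fin (P.excerpt s t).n => (hg j').choose) := by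
      intro j1 j2 h
      apply (P.excerpt s t).cinj
      rw [← (hg j1).choose_spec, ← (hg j2).choose_spec]
      exact congrArg X.c h
    have c1 := Fintype.card_le_of_injective _ i1
    have c2 := Fintype.card_le_of_injective _ i2
    simp only [Fintype.card_fin] at c1 c2
    omega
  have hrange : Set.range X.c = Set.range (fun j => (P.excerpt s t).c (Fin.cast hn j)) := by
    apply Set.eq_of_subset_of_subset
    · rintro x ⟨j, rfl⟩
      obtain ⟨j', hj'⟩ := hf j
      exact ⟨Fin.cast hn.symm j', hj'⟩
    · rintro x ⟨j, rfl⟩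
      obtain ⟨j0, hj0⟩ := hg (Fin.cast hn j)
      exact ⟨j0, hj0⟩
  have hmono2 : StrictMono (fun j : Fin X.n => (P.excerpt s t).c (Fin.cast hn j)) := by
    intro a b hab
    exact (P.excerpt s t).mono hab
  haveI hwf : WellFoundedLT (Fin X.n) := inferInstance
  have hc : X.c = fun j => (P.excerpt s t).c (Fin.cast hn j) :=
    (@StrictMono.range_inj _ _ _ _ hwf _ _ X.mono hmono2).mp hrange
  refine ext' (by rw [hL]; rfl) hn (fun j => by rw [hc]) ?_
  intro j
  obtain ⟨i, h1, h2, h3, h4⟩ := hfwd j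
  obtain ⟨i2, g1, g2, g3, g4⟩ := P.excerpt_spec s t (Fin.cast hn j)
  have hcj : X.c j = (P.excerpt s t).c (Fin.cast hn j) := congrFun hc j
  have : P.c i2 = P.c i := by linarith [h3, g3, hcj]
  rw [h4, g4, P.cinj this]

end MixedPattern

namespace MixedPattern

def Pure (P : MixedPattern) : Prop :=
  (∀ i : Fin P.n, (P.asg i).isSome) ∨ (∀ i : Fin P.n, P.asg i = none)

lemma compat_some {b : Bool} {y : Option Bool} (h : Compatible (some b) y)
    (hy : y.isSome) : y = some (!b) := by
  obtain ⟨b', rfl⟩ := Option.isSome_iff_exists.mp hy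
  have := h b
  cases b <;> cases b' <;> simp_all

lemma compat_symm {x y : Option Bool} (h : Compatible x y) : Compatible y x :=
  fun b hb => h b ⟨hb.2, hb.1⟩

lemma compat_map_not {x y : Option Bool} (h : Compatible x y) :
    Compatible (x.map not) (y.map not) := by
  rintro b ⟨hx, hy⟩
  obtain ⟨a, ha, ha2⟩ := Option.map_eq_some_iff.mp hx
  obtain ⟨a', ha', ha2'⟩ := Option.map_eq_some_iff.mp hy
  apply h (!b)
  constructor
  · rw [ha]; congr 1; cases a <;> simp_all
  · rw [ha']; congr 1; cases a' <;> simp_all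

lemma excerpt_pure {P : MixedPattern} (hp : P.Pure) (s t : ℝ) :
    (P.excerpt s t).Pure := by
  rcases hp with hp | hp
  · left
    intro j
    obtain ⟨i, _, _, _, h4⟩ := P.excerpt_spec s t j
    rw [h4]; exact hp i
  · right
    intro j
    obtain ⟨i, _, _, _, h4⟩ := P.excerpt_spec s t j
    rw [h4]; exact hp i

noncomputable def mirror (P : MixedPattern) : MixedPattern where
  L := P.L
  n := P.n
  c := fun i => P.L - P.c i.rev
  mono := by
    intro a b hab
    have : b.rev < a.rev := Fin.rev_lt_rev.mpr hab
    have := P.mono this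
    simp only
    linarith
  pos := fun i => sub_pos.mpr (P.lt_len _)
  lt_len := by
    intro i
    have := P.pos i.rev
    show P.L - P.c i.rev < P.L
    linarith
  asg := fun i => (P.asg i.rev).map not

@[simp] lemma mirror_L (P : MixedPattern) : (P.mirror).L = P.L := rfl
@[simp] lemma mirror_n (P : MixedPattern) : (P.mirror).n = P.n := rfl
lemma mirror_c (P : MixedPattern) (i : Fin P.mirror.n) :
    P.mirror.c i = P.L - P.c i.rev := rfl
lemma mirror_asg (P : MixedPattern) (i : Fin P.mirror.n) :
    P.mirror.asg i = (P.asg i.rev).map not := rfl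

lemma mirror_pure {P : MixedPattern} (hp : P.Pure) : P.mirror.Pure := by
  rcases hp with hp | hp
  · left; intro i; rw [mirror_asg]
    have := hp i.rev
    cases h : P.asg i.rev <;> rw [h] at this <;> simp_all
  · right; intro i; rw [mirror_asg, hp i.rev]; rfl

lemma excerpt_mirror (P : MixedPattern) (s t : ℝ) :
    P.mirror.excerpt s t = (P.excerpt (P.L - t) (P.L - s)).mirror := by
  symm
  apply eq_excerpt
  · show ((P.L - s) - (P.L - t)) = t - s; ring
  · intro j
    obtain ⟨i', h1, h2, h3, h4⟩ := P.excerpt_spec (P.L - t) (P.L - s) j.rev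
    refine ⟨(i'.rev : Fin P.mirror.n), ?_, ?_, ?_, ?_⟩
    · show s < P.L - P.c i'.rev.rev
      rw [Fin.rev_rev]; linarith
    · show P.L - P.c i'.rev.rev < t
      rw [Fin.rev_rev]; linarith
    · show (P.excerpt (P.L - t) (P.L - s)).L -
        (P.excerpt (P.L - t) (P.L - s)).c j.rev = (P.L - P.c i'.rev.rev) - s
      rw [Fin.rev_rev, h3, excerpt_L]; ring
    · show ((P.excerpt (P.L - t) (P.L - s)).asg j.rev).map not
        = (P.asg i'.rev.rev).map not
      rw [Fin.rev_rev, h4]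
  · intro im h1 h2
    have h1' : P.L - t < P.c im.rev := by
      have : P.mirror.c im = P.L - P.c im.rev := rfl
      linarith [this ▸ h2]
    have h2' : P.c im.rev < P.L - s := by
      have : P.mirror.c im = P.L - P.c im.rev := rfl
      linarith [this ▸ h1]
    obtain ⟨j', hj', _⟩ := P.excerpt_surj (P.L - t) (P.L - s) im.rev h1' h2'
    refine ⟨j'.rev, ?_⟩
    show (P.excerpt (P.L - t) (P.L - s)).L -
      (P.excerpt (P.L - t) (P.L - s)).c j'.rev.rev = P.mirror.c im - s
    rw [Fin.rev_rev, hj', excerpt_L]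
    show _ = (P.L - P.c im.rev) - s
    ring

lemma excerpt_comp (P : MixedPattern) (s t u v : ℝ) (hu : 0 ≤ u) (hv : s + v ≤ t) :
    (P.excerpt s t).excerpt u v = P.excerpt (s + u) (s + v) := by
  apply eq_excerpt
  · show (v - u : ℝ) = (s + v) - (s + u); ring
  · intro j
    obtain ⟨i1, g1, g2, g3, g4⟩ := (P.excerpt s t).excerpt_spec u v j
    obtain ⟨i, h1, h2, h3, h4⟩ := P.excerpt_spec s t i1
    refine ⟨i, by linarith, by linarith, by rw [g3, h3]; ring, by rw [g4, h4]⟩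
  · intro i h1 h2
    obtain ⟨i1, hi1, _⟩ := P.excerpt_surj s t i (by linarith) (by linarith)
    obtain ⟨j, hj, _⟩ := (P.excerpt s t).excerpt_surj u v i1
      (by rw [hi1]; linarith) (by rw [hi1]; linarith)
    exact ⟨j, by rw [hj, hi1]; ring⟩

end MixedPattern

namespace MixedPattern

lemma card_gt (n : ℕ) (k : Fin n) :
    (Finset.univ.filter (fun i : Fin n => (k:ℕ) < (i:ℕ))).card = n - ((k:ℕ)+1) := by
  have h : (Finset.univ.filter (fun i : Fin n => (k:ℕ) < (i:ℕ))) = Finset.Ioi k := by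
    ext i
    simp only [Finset.mem_filter, Finset.mem_univ, true_and, Finset.mem_Ioi]
    exact Fin.lt_def.symm
  rw [h, Fin.card_Ioi]; omega

lemma card_lt (n : ℕ) (k : Fin n) :
    (Finset.univ.filter (fun i : Fin n => (i:ℕ) < (k:ℕ))).card = (k:ℕ) := by
  have h : (Finset.univ.filter (fun i : Fin n => (i:ℕ) < (k:ℕ))) = Finset.Iio k := by
    ext i
    simp only [Finset.mem_filter, Finset.mem_univ, true_and, Finset.mem_Iio]
    exact Fin.lt_def.symm
  rw [h, Fin.card_Iio]

lemma excerpt_n_left (P : MixedPattern) (k : Fin P.n) :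
    (P.excerpt (P.c k) P.L).n = P.n - ((k:ℕ)+1) := by
  show (P.exS (P.c k) P.L).card = _
  rw [show P.exS (P.c k) P.L
      = Finset.univ.filter (fun i : Fin P.n => (k:ℕ) < (i:ℕ)) from ?_, card_gt]
  unfold exS
  apply Finset.filter_congr
  intro i _
  constructor
  · rintro ⟨h1, _⟩
    exact Fin.lt_def.mp (P.mono.lt_iff_lt.mp h1)
  · intro h
    exact ⟨P.mono.lt_iff_lt.mpr (Fin.lt_def.mpr h), P.lt_len i⟩

lemma excerpt_n_right (P : MixedPattern) (k : Fin P.n) :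
    (P.excerpt 0 (P.c k)).n = (k:ℕ) := by
  show (P.exS 0 (P.c k)).card = _
  rw [show P.exS 0 (P.c k)
      = Finset.univ.filter (fun i : Fin P.n => (i:ℕ) < (k:ℕ)) from ?_, card_lt]
  unfold exS
  apply Finset.filter_congr
  intro i _
  constructor
  · rintro ⟨_, h2⟩
    exact Fin.lt_def.mp (P.mono.lt_iff_lt.mp h2)
  · intro h
    exact ⟨P.pos i, P.mono.lt_iff_lt.mpr (Fin.lt_def.mpr h)⟩

lemma excerpt_n_zero (P : MixedPattern) (hn : P.n = 0) (s t : ℝ) :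
    (P.excerpt s t).n = 0 := by
  apply Nat.le_zero.mp
  calc (P.excerpt s t).n ≤ (Finset.univ : Finset (Fin P.n)).card :=
      Finset.card_filter_le Finset.univ (fun i : Fin P.n => s < P.c i ∧ P.c i < t)
    _ = 0 := by simp [hn]

lemma excerpt_dte (P : MixedPattern) (s t : ℝ) (j : Fin (P.excerpt s t).n) :
    (P.excerpt s t).distToEnd j
      = min ((P.excerpt s t).c j) (t - s - (P.excerpt s t).c j) := rfl

lemma excerpt_valid {P : MixedPattern} {k0 : Fin P.n} (hv : P.ValidFold k0)
    {s t : ℝ} (hs : 0 ≤ s) (ht : t ≤ P.L)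
    (k' : Fin (P.excerpt s t).n) (hk' : (P.excerpt s t).c k' = P.c k0 - s) :
    (P.excerpt s t).ValidFold k' := by
  intro i' hne hd
  obtain ⟨i, h1, h2, h3, h4⟩ := P.excerpt_spec s t i'
  have hdle : (P.excerpt s t).distToEnd k' ≤ P.distToEnd k0 := by
    rw [excerpt_dte, hk']
    unfold distToEnd
    apply min_le_min <;> linarith
  have hik0 : i ≠ k0 := by
    intro hik
    apply hne
    apply (P.excerpt s t).cinj
    rw [hk', h3, hik]
  have hdist : |P.c i - P.c k0| < P.distToEnd k0 := by
    have : P.c i - P.c k0 = (P.excerpt s t).c i' - (P.excerpt s t).c k' := by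
      rw [h3, hk']; ring
    rw [this]
    exact lt_of_lt_of_le hd hdle
  obtain ⟨j, hjk, hcj, hcomp⟩ := hv i hik0 hdist
  have habs : |P.c j - P.c k0| < (P.excerpt s t).distToEnd k' := by
    have e : P.c j - P.c k0 = -(P.c i - P.c k0) := by rw [hcj]; ring
    have e2 : P.c i - P.c k0 = (P.excerpt s t).c i' - (P.excerpt s t).c k' := by
      rw [h3, hk']; ring
    rw [e, abs_neg, e2]
    exact hd
  have hdmin : (P.excerpt s t).distToEnd k'
      = min (P.c k0 - s) (t - P.c k0) := by
    rw [excerpt_dte, hk']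
    congr 1
    ring
  rw [hdmin] at habs
  have hjs : s < P.c j := by
    have := (abs_lt.mp (habs.trans_le (min_le_left _ _))).1
    linarith
  have hjt : P.c j < t := by
    have := (abs_lt.mp (habs.trans_le (min_le_right _ _))).2
    linarith
  obtain ⟨j', hj'c, hj'a⟩ := P.excerpt_surj s t j hjs hjt
  refine ⟨j', ?_, ?_, ?_⟩
  · intro hh
    apply hjk
    apply P.cinj
    have : (P.excerpt s t).c j' = (P.excerpt s t).c k' := by rw [hh]
    rw [hj'c, hk'] at this
    linarith
  · rw [hj'c, hcj, h3, hk']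
    ring
  · rw [h4, hj'a]
    exact hcomp

end MixedPattern


namespace MixedPattern

lemma pure_asg_eq {P : MixedPattern} (hp : P.Pure) {k : Fin P.n} (hv : P.ValidFold k)
    {i m : Fin P.n} (him : i ≠ k) (hdist : |P.c i - P.c k| < P.distToEnd k)
    (hm : P.c m = 2 * P.c k - P.c i) {b : Bool} (hib : P.asg i = some b) :
    P.asg m = some (!b) := by
  obtain ⟨j, hjk, hcj, hcomp⟩ := hv i him hdist
  have hjm : j = m := P.cinj (by rw [hcj, hm])
  rcases hp with hp | hp
  · subst hjm
    rw [hib] at hcomp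
    exact compat_some hcomp (hp j)
  · exact absurd (hp i) (by rw [hib]; simp)

lemma isFoldResult_left {P : MixedPattern} (hp : P.Pure) {k : Fin P.n}
    (hv : P.ValidFold k) (hside : P.c k ≤ P.L - P.c k) :
    P.IsFoldResult k (P.excerpt (P.c k) P.L) := by
  have hdte : P.distToEnd k = P.c k := min_eq_left hside
  left
  refine ⟨hside, by rw [excerpt_L], ?_, ?_⟩
  · rw [excerpt_n_left]
    have := k.isLt
    omega
  · intro j
    obtain ⟨i, h1, h2, h3, h4⟩ := P.excerpt_spec (P.c k) P.L j
    refine ⟨i, Fin.lt_def.mp (P.mono.lt_iff_lt.mp h1), h3, ?_, fun _ => h4⟩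
    intro i0 b hi0k heq hasg
    rw [h4]
    apply pure_asg_eq hp hv (i := i0) (m := i)
    · exact Fin.ne_of_lt (Fin.lt_def.mpr hi0k)
    · have hlt : P.c i0 < P.c k := P.mono.lt_iff_lt.mpr (Fin.lt_def.mpr hi0k)
      rw [hdte, abs_sub_comm, abs_of_pos (by linarith)]
      linarith [P.pos i0]
    · rw [heq]
    · exact hasg

lemma isFoldResult_right {P : MixedPattern} (hp : P.Pure) {k : Fin P.n}
    (hv : P.ValidFold k) (hside : P.L - P.c k ≤ P.c k) :
    P.IsFoldResult k (P.excerpt 0 (P.c k)) := by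
  have hdte : P.distToEnd k = P.L - P.c k := min_eq_right hside
  right
  refine ⟨hside, by rw [excerpt_L]; ring, excerpt_n_right P k, ?_⟩
  intro j
  obtain ⟨i, h1, h2, h3, h4⟩ := P.excerpt_spec 0 (P.c k) j
  refine ⟨i, Fin.lt_def.mp (P.mono.lt_iff_lt.mp h2), by rw [h3]; ring, ?_, fun _ => h4⟩
  intro i0 b hki0 heq hasg
  rw [h4]
  apply pure_asg_eq hp hv (i := i0) (m := i)
  · exact Fin.ne_of_gt (Fin.lt_def.mpr hki0)
  · have hlt : P.c k < P.c i0 := P.mono.lt_iff_lt.mpr (Fin.lt_def.mpr hki0)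
    rw [hdte, abs_of_pos (by linarith)]
    linarith [P.lt_len i0]
  · rw [heq]
  · exact hasg

end MixedPattern

namespace MixedPattern

lemma foldResult_eq {P : MixedPattern} (hp : P.Pure) {k : Fin P.n}
    (hv : P.ValidFold k) {P' : MixedPattern} (hr : P.IsFoldResult k P') :
    (P.c k ≤ P.L - P.c k ∧ P' = P.excerpt (P.c k) P.L) ∨
    (P.L - P.c k ≤ P.c k ∧ P' = P.excerpt 0 (P.c k)) := by
  rcases hr with ⟨hside, hL, hn, hall⟩ | ⟨hside, hL, hn, hall⟩
  · left
    have hdte : P.distToEnd k = P.c k := min_eq_left hside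
    refine ⟨hside, ?_⟩
    apply eq_excerpt
    · exact hL
    · intro j
      obtain ⟨j', hkj', hcj, hcl1, hcl2⟩ := hall j
      have hckj : P.c k < P.c j' := P.mono.lt_iff_lt.mpr (Fin.lt_def.mpr hkj')
      refine ⟨j', hckj, P.lt_len j', hcj, ?_⟩
      rcases hp with hps | hpn
      · by_cases hex : ∃ i0 : Fin P.n, (i0:ℕ) < (k:ℕ) ∧ 2 * P.c k - P.c i0 = P.c j'
        · obtain ⟨i0, hi0, heq0⟩ := hex
          obtain ⟨b, hb⟩ := Option.isSome_iff_exists.mp (hps i0)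
          rw [hcl1 i0 b hi0 heq0 hb]
          symm
          apply pure_asg_eq (Or.inl hps) hv (i := i0) (m := j')
          · exact Fin.ne_of_lt (Fin.lt_def.mpr hi0)
          · have hlt : P.c i0 < P.c k := P.mono.lt_iff_lt.mpr (Fin.lt_def.mpr hi0)
            rw [hdte, abs_sub_comm, abs_of_pos (by linarith)]
            linarith [P.pos i0]
          · rw [heq0]
          · exact hb
        · apply hcl2
          intro i0 hi0 heq0
          exact absurd ⟨i0, hi0, heq0⟩ hex
      · apply hcl2
        intro i0 _ _
        exact hpn i0
    · intro i hki hiL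
      have hcard : Fintype.card {m : Fin P.n // (k:ℕ) < (m:ℕ)} = P.n - ((k:ℕ)+1) := by
        rw [Fintype.card_subtype, card_gt]
      have hF : ∀ j : Fin P'.n, ∃ m : Fin P.n, (k:ℕ) < (m:ℕ) ∧ P'.c j = P.c m - P.c k := by
        intro j
        obtain ⟨j', h1, h2, _⟩ := hall j
        exact ⟨j', h1, h2⟩
      set F : Fin P'.n → {m : Fin P.n // (k:ℕ) < (m:ℕ)} :=
        fun j => ⟨(hF j).choose, (hF j).choose_spec.1⟩ with hFdef
      have hFinj : Function.Injective F := by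
        intro j1 j2 h
        apply P'.cinj
        rw [(hF j1).choose_spec.2, (hF j2).choose_spec.2]
        have : (hF j1).choose = (hF j2).choose := congrArg Subtype.val h
        rw [this]
      have hFbij : Function.Bijective F := by
        rw [Fintype.bijective_iff_injective_and_card]
        refine ⟨hFinj, ?_⟩
        rw [Fintype.card_fin, hcard]
        omega
      obtain ⟨j, hj⟩ := hFbij.2 ⟨i, Fin.lt_def.mp (P.mono.lt_iff_lt.mp hki)⟩
      refine ⟨j, ?_⟩
      rw [(hF j).choose_spec.2]
      have : (hF j).choose = i := congrArg Subtype.val hj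
      rw [this]
  · right
    have hdte : P.distToEnd k = P.L - P.c k := min_eq_right hside
    refine ⟨hside, ?_⟩
    apply eq_excerpt
    · rw [hL]; ring
    · intro j
      obtain ⟨j', hkj', hcj, hcl1, hcl2⟩ := hall j
      have hckj : P.c j' < P.c k := P.mono.lt_iff_lt.mpr (Fin.lt_def.mpr hkj')
      refine ⟨j', P.pos j', hckj, by rw [hcj]; ring, ?_⟩
      rcases hp with hps | hpn
      · by_cases hex : ∃ i0 : Fin P.n, (k:ℕ) < (i0:ℕ) ∧ 2 * P.c k - P.c i0 = P.c j'
        · obtain ⟨i0, hi0, heq0⟩ := hex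
          obtain ⟨b, hb⟩ := Option.isSome_iff_exists.mp (hps i0)
          rw [hcl1 i0 b hi0 heq0 hb]
          symm
          apply pure_asg_eq (Or.inl hps) hv (i := i0) (m := j')
          · exact Fin.ne_of_gt (Fin.lt_def.mpr hi0)
          · have hlt : P.c k < P.c i0 := P.mono.lt_iff_lt.mpr (Fin.lt_def.mpr hi0)
            rw [hdte, abs_of_pos (by linarith)]
            linarith [P.lt_len i0]
          · rw [heq0]
          · exact hb
        · apply hcl2
          intro i0 hi0 heq0
          exact absurd ⟨i0, hi0, heq0⟩ hex
      · apply hcl2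
        intro i0 _ _
        exact hpn i0
    · intro i h0i hik
      have hcard : Fintype.card {m : Fin P.n // (m:ℕ) < (k:ℕ)} = (k:ℕ) := by
        rw [Fintype.card_subtype, card_lt]
      have hF : ∀ j : Fin P'.n, ∃ m : Fin P.n, (m:ℕ) < (k:ℕ) ∧ P'.c j = P.c m := by
        intro j
        obtain ⟨j', h1, h2, _⟩ := hall j
        exact ⟨j', h1, h2⟩
      set F : Fin P'.n → {m : Fin P.n // (m:ℕ) < (k:ℕ)} :=
        fun j => ⟨(hF j).choose, (hF j).choose_spec.1⟩ with hFdef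
      have hFinj : Function.Injective F := by
        intro j1 j2 h
        apply P'.cinj
        rw [(hF j1).choose_spec.2, (hF j2).choose_spec.2]
        have : (hF j1).choose = (hF j2).choose := congrArg Subtype.val h
        rw [this]
      have hFbij : Function.Bijective F := by
        rw [Fintype.bijective_iff_injective_and_card]
        exact ⟨hFinj, by rw [Fintype.card_fin, hcard, hn]⟩
      obtain ⟨j, hj⟩ := hFbij.2 ⟨i, Fin.lt_def.mp (P.mono.lt_iff_lt.mp hik)⟩
      refine ⟨j, ?_⟩
      rw [(hF j).choose_spec.2]
      have : (hF j).choose = i := congrArg Subtype.val hj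
      rw [this]
      ring

end MixedPattern

namespace MixedPattern

lemma mirror_dte (P : MixedPattern) (k : Fin P.n) :
    P.mirror.distToEnd k.rev = P.distToEnd k := by
  unfold distToEnd
  erw [mirror_L, mirror_c, Fin.rev_rev]
  rw [min_comm]
  congr 1
  ring

lemma mirror_valid {P : MixedPattern} {k : Fin P.n} (hv : P.ValidFold k) :
    P.mirror.ValidFold k.rev := by
  intro i hne hd
  rw [mirror_dte] at hd
  have hd' : |P.c i.rev - P.c k| < P.distToEnd k := by
    have : P.mirror.c i - P.mirror.c k.rev = -(P.c i.rev - P.c k) := by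
      erw [mirror_c, mirror_c, Fin.rev_rev]; ring
    rw [this, abs_neg] at hd
    exact hd
  have hne' : i.rev ≠ k := by
    intro h
    apply hne
    erw [← h, Fin.rev_rev]
  obtain ⟨j, hjk, hcj, hcomp⟩ := hv i.rev hne' hd'
  refine ⟨j.rev, ?_, ?_, ?_⟩
  · intro h
    exact hjk (by rwa [← Fin.rev_inj])
  · erw [mirror_c, mirror_c, mirror_c, Fin.rev_rev, Fin.rev_rev, hcj]
    ring
  · erw [mirror_asg, mirror_asg, Fin.rev_rev]
    exact compat_map_not hcomp

lemma mirror_excerpt_across {P : MixedPattern} (hp : P.Pure) {k0 : Fin P.n}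
    (hv : P.ValidFold k0) (s t : ℝ)
    (hside : t ≤ P.c k0 ∨ P.c k0 ≤ s)
    (hzone : ∀ i : Fin P.n,
      (s < P.c i ∧ P.c i < t) ∨ (2 * P.c k0 - t < P.c i ∧ P.c i < 2 * P.c k0 - s) →
      |P.c i - P.c k0| < P.distToEnd k0) :
    P.excerpt s t = (P.excerpt (2 * P.c k0 - t) (2 * P.c k0 - s)).mirror := by
  have hnotmem : ∀ x : ℝ, (s < x ∧ x < t) ∨
      (2 * P.c k0 - t < x ∧ x < 2 * P.c k0 - s) → x ≠ P.c k0 := by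
    rintro x (⟨h1, h2⟩ | ⟨h1, h2⟩) hx <;> rcases hside with h | h <;> subst hx <;> linarith
  symm
  apply eq_excerpt
  · show (2 * P.c k0 - s) - (2 * P.c k0 - t) = t - s; ring
  · intro j
    obtain ⟨i', h1, h2, h3, h4⟩ :=
      P.excerpt_spec (2 * P.c k0 - t) (2 * P.c k0 - s) j.rev
    have hne : i' ≠ k0 := fun h => hnotmem (P.c i') (Or.inr ⟨h1, h2⟩) (by rw [h])
    obtain ⟨m, hmk, hcm, hcomp⟩ := hv i' hne (hzone i' (Or.inr ⟨h1, h2⟩))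
    refine ⟨m, by rw [hcm]; linarith, by rw [hcm]; linarith, ?_, ?_⟩
    · show (P.excerpt (2 * P.c k0 - t) (2 * P.c k0 - s)).L
        - (P.excerpt (2 * P.c k0 - t) (2 * P.c k0 - s)).c j.rev = P.c m - s
      rw [h3, excerpt_L, hcm]
      ring
    · show ((P.excerpt (2 * P.c k0 - t) (2 * P.c k0 - s)).asg j.rev).map not
        = P.asg m
      rw [h4]
      rcases hp with hps | hpn
      · obtain ⟨b, hb⟩ := Option.isSome_iff_exists.mp (hps i')
        rw [hb, compat_some (hb ▸ hcomp) (hps m)]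
        rfl
      · rw [hpn i', hpn m]
        rfl
  · intro i h1 h2
    have hne : i ≠ k0 := fun h => hnotmem (P.c i) (Or.inl ⟨h1, h2⟩) (by rw [h])
    obtain ⟨m, hmk, hcm, hcomp⟩ := hv i hne (hzone i (Or.inl ⟨h1, h2⟩))
    obtain ⟨j', hj'c, _⟩ := P.excerpt_surj (2 * P.c k0 - t) (2 * P.c k0 - s) m
      (by rw [hcm]; linarith) (by rw [hcm]; linarith)
    refine ⟨j'.rev, ?_⟩
    show (P.excerpt (2 * P.c k0 - t) (2 * P.c k0 - s)).L
      - (P.excerpt (2 * P.c k0 - t) (2 * P.c k0 - s)).c j'.rev.rev = P.c i - s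
    rw [Fin.rev_rev, hj'c, excerpt_L, hcm]
    ring

end MixedPattern


namespace MixedPattern

lemma foldable_mirror : ∀ {P : MixedPattern}, CompletelyFoldable P → P.Pure →
    CompletelyFoldable P.mirror := by
  intro P h
  induction h with
  | nil P h =>
    intro _
    exact CompletelyFoldable.nil _ (by rw [mirror_n, h])
  | fold P k0 P0 hv hr h0 IH =>
    intro hp
    have hv' : P.mirror.ValidFold k0.rev := mirror_valid hv
    have hp' : P.mirror.Pure := mirror_pure hp
    have hmc : P.mirror.c k0.rev = P.L - P.c k0 := by erw [mirror_c, Fin.rev_rev]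
    rcases foldResult_eq hp hv hr with ⟨hside, hP0⟩ | ⟨hside, hP0⟩
    · have hside' : P.mirror.L - P.mirror.c k0.rev ≤ P.mirror.c k0.rev := by
        rw [mirror_L, hmc]; linarith
      have hr' := isFoldResult_right hp' hv' hside'
      refine CompletelyFoldable.fold _ k0.rev _ hv' hr' ?_
      rw [hmc, excerpt_mirror]
      have e1 : P.L - (P.L - P.c k0) = P.c k0 := by ring
      have e2 : P.L - (0:ℝ) = P.L := by ring
      rw [e1, e2, ← hP0]
      exact IH (by rw [hP0]; exact excerpt_pure hp _ _)
    · have hside' : P.mirror.c k0.rev ≤ P.mirror.L - P.mirror.c k0.rev := by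
        rw [mirror_L, hmc]; linarith
      have hr' := isFoldResult_left hp' hv' hside'
      refine CompletelyFoldable.fold _ k0.rev _ hv' hr' ?_
      rw [hmc, mirror_L, excerpt_mirror]
      have e1 : P.L - P.L = (0:ℝ) := by ring
      have e2 : P.L - (P.L - P.c k0) = P.c k0 := by ring
      rw [e1, e2, ← hP0]
      exact IH (by rw [hP0]; exact excerpt_pure hp _ _)

end MixedPattern

namespace MixedPattern

lemma excerpt_foldable : ∀ N : ℕ, ∀ P : MixedPattern, P.n = N → P.Pure →
    CompletelyFoldable P → ∀ s t : ℝ, 0 ≤ s → t ≤ P.L →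
    CompletelyFoldable (P.excerpt s t) := by
  intro N
  induction N using Nat.strong_induction_on with
  | _ N IH =>
    intro P hN hp h s t hs ht
    cases h with
    | nil _ hzero =>
      exact CompletelyFoldable.nil _ (excerpt_n_zero P hzero s t)
    | fold _ k0 P0 hv0 hr0 h0 =>
      have hb0 : 0 < P.c k0 := P.pos k0
      have hbL : P.c k0 < P.L := P.lt_len k0
      have hn0 : P0.n < P.n := by
        rcases hr0 with ⟨_, _, hn, _⟩ | ⟨_, _, hn, _⟩
        · have := k0.isLt; omega
        · have := k0.isLt; omega
      rcases foldResult_eq hp hv0 hr0 with ⟨hside, hP0⟩ | ⟨hside, hP0⟩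
      · -- left-shorter fold at k0: P0 = P.excerpt (P.c k0) P.L
        have hdte : P.distToEnd k0 = P.c k0 := min_eq_left hside
        have hfold0 : CompletelyFoldable (P.excerpt (P.c k0) P.L) := hP0 ▸ h0
        have hpure0 : (P.excerpt (P.c k0) P.L).Pure := excerpt_pure hp _ _
        have hnn : (P.excerpt (P.c k0) P.L).n < N := by
          rw [← congrArg n hP0]; omega
        have IH0 : ∀ u v : ℝ, 0 ≤ u → v ≤ P.L - P.c k0 →
            CompletelyFoldable ((P.excerpt (P.c k0) P.L).excerpt u v) := by
          intro u v hu hv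
          exact IH _ hnn _ rfl hpure0 hfold0 u v hu (by rw [excerpt_L]; linarith)
        rcases le_or_gt t (P.c k0) with hA | h1
        · -- Case A : t ≤ b, mirror to the right of b
          have hzone : ∀ i : Fin P.n,
              (s < P.c i ∧ P.c i < t) ∨
              (2 * P.c k0 - t < P.c i ∧ P.c i < 2 * P.c k0 - s) →
              |P.c i - P.c k0| < P.distToEnd k0 := by
            rintro i (⟨z1, z2⟩ | ⟨z1, z2⟩) <;> rw [hdte, abs_lt] <;>
              constructor <;> linarith [P.pos i]
          rw [mirror_excerpt_across hp hv0 s t (Or.inl hA) hzone]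
          have e : P.excerpt (2 * P.c k0 - t) (2 * P.c k0 - s)
              = (P.excerpt (P.c k0) P.L).excerpt (P.c k0 - t) (P.c k0 - s) := by
            rw [excerpt_comp P (P.c k0) P.L (P.c k0 - t) (P.c k0 - s)
              (by linarith) (by linarith)]
            congr 1 <;> ring
          rw [e]
          exact foldable_mirror (IH0 _ _ (by linarith) (by linarith))
            (excerpt_pure hpure0 _ _)
        · rcases le_or_gt (P.c k0) s with hB | h2
          · -- Case B : b ≤ s
            have e : P.excerpt s t
                = (P.excerpt (P.c k0) P.L).excerpt (s - P.c k0) (t - P.c k0) := by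
              rw [excerpt_comp P (P.c k0) P.L (s - P.c k0) (t - P.c k0)
                (by linarith) (by linarith)]
              congr 1 <;> ring
            rw [e]
            exact IH0 _ _ (by linarith) (by linarith)
          · -- Case C : s < b < t
            obtain ⟨k', hk'c, _⟩ := P.excerpt_surj s t k0 h2 h1
            have hv' := excerpt_valid hv0 hs ht k' hk'c
            have hpe : (P.excerpt s t).Pure := excerpt_pure hp s t
            rcases le_total (P.c k0 - s) (t - P.c k0) with hC | hC
            · have hside' : (P.excerpt s t).c k'
                  ≤ (P.excerpt s t).L - (P.excerpt s t).c k' := by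
                rw [hk'c, excerpt_L]; linarith
              have hr' := isFoldResult_left hpe hv' hside'
              refine CompletelyFoldable.fold _ k' _ hv' hr' ?_
              rw [hk'c, excerpt_L]
              have e : (P.excerpt s t).excerpt (P.c k0 - s) (t - s)
                  = (P.excerpt (P.c k0) P.L).excerpt 0 (t - P.c k0) := by
                rw [excerpt_comp P s t (P.c k0 - s) (t - s) (by linarith) (by linarith),
                  excerpt_comp P (P.c k0) P.L 0 (t - P.c k0) le_rfl (by linarith)]
                congr 1 <;> ring
              rw [e]
              exact IH0 0 _ le_rfl (by linarith)
            · have hside' : (P.excerpt s t).L - (P.excerpt s t).c k'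
                  ≤ (P.excerpt s t).c k' := by
                rw [hk'c, excerpt_L]; linarith
              have hr' := isFoldResult_right hpe hv' hside'
              refine CompletelyFoldable.fold _ k' _ hv' hr' ?_
              rw [hk'c]
              have e : (P.excerpt s t).excerpt 0 (P.c k0 - s) = P.excerpt s (P.c k0) := by
                rw [excerpt_comp P s t 0 (P.c k0 - s) le_rfl (by linarith)]
                congr 1 <;> ring
              rw [e]
              have hzone : ∀ i : Fin P.n,
                  (s < P.c i ∧ P.c i < P.c k0) ∨
                  (2 * P.c k0 - P.c k0 < P.c i ∧ P.c i < 2 * P.c k0 - s) →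
                  |P.c i - P.c k0| < P.distToEnd k0 := by
                rintro i (⟨z1, z2⟩ | ⟨z1, z2⟩) <;> rw [hdte, abs_lt] <;>
                  constructor <;> linarith [P.pos i]
              rw [mirror_excerpt_across hp hv0 s (P.c k0) (Or.inl le_rfl) hzone]
              have e2 : P.excerpt (2 * P.c k0 - P.c k0) (2 * P.c k0 - s)
                  = (P.excerpt (P.c k0) P.L).excerpt 0 (P.c k0 - s) := by
                rw [excerpt_comp P (P.c k0) P.L 0 (P.c k0 - s) le_rfl (by linarith)]
                congr 1 <;> ring
              rw [e2]
              exact foldable_mirror (IH0 0 _ le_rfl (by linarith))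
                (excerpt_pure hpure0 _ _)
      · -- right-shorter fold at k0: P0 = P.excerpt 0 (P.c k0)
        have hdte : P.distToEnd k0 = P.L - P.c k0 := min_eq_right hside
        have hfold0 : CompletelyFoldable (P.excerpt 0 (P.c k0)) := hP0 ▸ h0
        have hpure0 : (P.excerpt 0 (P.c k0)).Pure := excerpt_pure hp _ _
        have hnn : (P.excerpt 0 (P.c k0)).n < N := by
          rw [← congrArg n hP0]; omega
        have IH0 : ∀ u v : ℝ, 0 ≤ u → v ≤ P.c k0 →
            CompletelyFoldable ((P.excerpt 0 (P.c k0)).excerpt u v) := by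
          intro u v hu hv
          exact IH _ hnn _ rfl hpure0 hfold0 u v hu (by rw [excerpt_L]; linarith)
        rcases le_or_gt (P.c k0) s with hA | h1
        · -- Case A : b ≤ s, mirror to the left of b
          have hzone : ∀ i : Fin P.n,
              (s < P.c i ∧ P.c i < t) ∨
              (2 * P.c k0 - t < P.c i ∧ P.c i < 2 * P.c k0 - s) →
              |P.c i - P.c k0| < P.distToEnd k0 := by
            rintro i (⟨z1, z2⟩ | ⟨z1, z2⟩) <;> rw [hdte, abs_lt] <;>
              constructor <;> linarith [P.lt_len i]
          rw [mirror_excerpt_across hp hv0 s t (Or.inr hA) hzone]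
          have e : P.excerpt (2 * P.c k0 - t) (2 * P.c k0 - s)
              = (P.excerpt 0 (P.c k0)).excerpt (2 * P.c k0 - t) (2 * P.c k0 - s) := by
            rw [excerpt_comp P 0 (P.c k0) (2 * P.c k0 - t) (2 * P.c k0 - s)
              (by linarith) (by linarith)]
            congr 1 <;> ring
          rw [e]
          exact foldable_mirror (IH0 _ _ (by linarith) (by linarith))
            (excerpt_pure hpure0 _ _)
        · rcases le_or_gt t (P.c k0) with hB | h2
          · -- Case B : t ≤ b
            have e : P.excerpt s t = (P.excerpt 0 (P.c k0)).excerpt s t := by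
              rw [excerpt_comp P 0 (P.c k0) s t hs (by linarith)]
              congr 1 <;> ring
            rw [e]
            exact IH0 _ _ hs hB
          · -- Case C : s < b < t
            obtain ⟨k', hk'c, _⟩ := P.excerpt_surj s t k0 h1 h2
            have hv' := excerpt_valid hv0 hs ht k' hk'c
            have hpe : (P.excerpt s t).Pure := excerpt_pure hp s t
            rcases le_total (t - P.c k0) (P.c k0 - s) with hC | hC
            · have hside' : (P.excerpt s t).L - (P.excerpt s t).c k'
                  ≤ (P.excerpt s t).c k' := by
                rw [hk'c, excerpt_L]; linarith
              have hr' := isFoldResult_right hpe hv' hside'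
              refine CompletelyFoldable.fold _ k' _ hv' hr' ?_
              rw [hk'c]
              have e : (P.excerpt s t).excerpt 0 (P.c k0 - s)
                  = (P.excerpt 0 (P.c k0)).excerpt s (P.c k0) := by
                rw [excerpt_comp P s t 0 (P.c k0 - s) le_rfl (by linarith),
                  excerpt_comp P 0 (P.c k0) s (P.c k0) hs (by linarith)]
                congr 1 <;> ring
              rw [e]
              exact IH0 s _ hs le_rfl
            · have hside' : (P.excerpt s t).c k'
                  ≤ (P.excerpt s t).L - (P.excerpt s t).c k' := by
                rw [hk'c, excerpt_L]; linarith
              have hr' := isFoldResult_left hpe hv' hside'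
              refine CompletelyFoldable.fold _ k' _ hv' hr' ?_
              rw [hk'c, excerpt_L]
              have e : (P.excerpt s t).excerpt (P.c k0 - s) (t - s)
                  = P.excerpt (P.c k0) t := by
                rw [excerpt_comp P s t (P.c k0 - s) (t - s) (by linarith) (by linarith)]
                congr 1 <;> ring
              rw [e]
              have hzone : ∀ i : Fin P.n,
                  (P.c k0 < P.c i ∧ P.c i < t) ∨
                  (2 * P.c k0 - t < P.c i ∧ P.c i < 2 * P.c k0 - P.c k0) →
                  |P.c i - P.c k0| < P.distToEnd k0 := by
                rintro i (⟨z1, z2⟩ | ⟨z1, z2⟩) <;> rw [hdte, abs_lt] <;>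
                  constructor <;> linarith [P.lt_len i]
              rw [mirror_excerpt_across hp hv0 (P.c k0) t (Or.inr le_rfl) hzone]
              have e2 : P.excerpt (2 * P.c k0 - t) (2 * P.c k0 - P.c k0)
                  = (P.excerpt 0 (P.c k0)).excerpt (2 * P.c k0 - t) (P.c k0) := by
                rw [excerpt_comp P 0 (P.c k0) (2 * P.c k0 - t) (P.c k0)
                  (by linarith) (by linarith)]
                congr 1 <;> ring
              rw [e2]
              exact foldable_mirror (IH0 _ _ (by linarith) le_rfl)
                (excerpt_pure hpure0 _ _)

end MixedPattern


/-- For fully assigned (or fully unassigned) 1D crease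
patterns in the all-layers model, valid folds may be performed in any order:
if the pattern is completely foldable by valid all-layers folds, then
performing any valid all-layers fold first leaves a completely foldable
pattern. -/
theorem assigned_valid_folds_any_order (P : MixedPattern)
    (hpure : (∀ i : Fin P.n, (P.asg i).isSome) ∨ (∀ i : Fin P.n, P.asg i = none))
    (h : CompletelyFoldable P)
    (k : Fin P.n) (hv : P.ValidFold k)
    (P' : MixedPattern) (hr : P.IsFoldResult k P') :
    CompletelyFoldable P' := by
  have hp : P.Pure := hpure
  rcases MixedPattern.foldResult_eq hp hv hr with ⟨_, hP'⟩ | ⟨_, hP'⟩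
  · rw [hP']
    exact MixedPattern.excerpt_foldable P.n P rfl hp h (P.c k) P.L
      (le_of_lt (P.pos k)) le_rfl
  · rw [hP']
    exact MixedPattern.excerpt_foldable P.n P rfl hp h 0 (P.c k)
      le_rfl (le_of_lt (P.lt_len k))
end

section
/- A fold of one crease of the folded paper onto a non-vertex interior point of the paper in an all-layers 1D folding makes the crease pattern unfoldable: in the all-layers model, if a fold at crease P causes some unfolded crease Q to land at a point strictly interior to the remaining paper that is not a crease, then no subsequent sequence of all-layers folds can fold Q. -/
namespace MixedPattern

/-- `(P', g')` is the state resulting from an all-layers fold of the state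
`(P, g)` at crease `k` (where `g` marks the creases that are already glued
flat, i.e., stuck to flat paper and hence never foldable).  The shorter side
is reflected onto the longer side and glued; the creases of the new pattern
are the kept creases of the longer side together with the landing positions of
the reflected creases (matching pairs merge).  A new crease is glued iff it
comes from a glued crease, or it lies in the glued overlap region without
being matched by a partner crease (it is glued to flat paper). -/
def GFoldResult (P : MixedPattern) (g : Fin P.n → Bool) (k : Fin P.n)
    (P' : MixedPattern) (g' : Fin P'.n → Bool) : Prop :=
  g k = false ∧
  (( -- the left side is (nonstrictly) shorter and is reflected to the right
    P.c k ≤ P.L - P.c k ∧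
    P'.L = P.L - P.c k ∧
    (∀ j' : Fin P.n, (k : ℕ) < (j' : ℕ) →
      ∃ j : Fin P'.n, P'.c j = P.c j' - P.c k) ∧
    (∀ i : Fin P.n, (i : ℕ) < (k : ℕ) →
      ∃ j : Fin P'.n, P'.c j = P.c k - P.c i) ∧
    (∀ j : Fin P'.n,
      (∃ j' : Fin P.n, (k : ℕ) < (j' : ℕ) ∧ P'.c j = P.c j' - P.c k) ∨
      (∃ i : Fin P.n, (i : ℕ) < (k : ℕ) ∧ P'.c j = P.c k - P.c i)) ∧
    (∀ j : Fin P'.n, g' j = true ↔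
      (∃ j' : Fin P.n, (k : ℕ) < (j' : ℕ) ∧ P'.c j = P.c j' - P.c k ∧
        (g j' = true ∨ (P'.c j < P.c k ∧
          ∀ i : Fin P.n, (i : ℕ) < (k : ℕ) → P.c k - P.c i ≠ P'.c j))) ∨
      (∃ i : Fin P.n, (i : ℕ) < (k : ℕ) ∧ P'.c j = P.c k - P.c i ∧
        (g i = true ∨
          ∀ j' : Fin P.n, (k : ℕ) < (j' : ℕ) → P.c j' - P.c k ≠ P'.c j)))) ∨
  ( -- the right side is (nonstrictly) shorter and is reflected to the left
    P.L - P.c k ≤ P.c k ∧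
    P'.L = P.c k ∧
    (∀ j' : Fin P.n, (j' : ℕ) < (k : ℕ) →
      ∃ j : Fin P'.n, P'.c j = P.c j') ∧
    (∀ i : Fin P.n, (k : ℕ) < (i : ℕ) → 0 < 2 * P.c k - P.c i →
      ∃ j : Fin P'.n, P'.c j = 2 * P.c k - P.c i) ∧
    (∀ j : Fin P'.n,
      (∃ j' : Fin P.n, (j' : ℕ) < (k : ℕ) ∧ P'.c j = P.c j') ∨
      (∃ i : Fin P.n, (k : ℕ) < (i : ℕ) ∧ P'.c j = 2 * P.c k - P.c i)) ∧
    (∀ j : Fin P'.n, g' j = true ↔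
      (∃ j' : Fin P.n, (j' : ℕ) < (k : ℕ) ∧ P'.c j = P.c j' ∧
        (g j' = true ∨ (2 * P.c k - P.L < P'.c j ∧
          ∀ i : Fin P.n, (k : ℕ) < (i : ℕ) → 2 * P.c k - P.c i ≠ P'.c j))) ∨
      (∃ i : Fin P.n, (k : ℕ) < (i : ℕ) ∧ P'.c j = 2 * P.c k - P.c i ∧
        (g i = true ∨
          ∀ j' : Fin P.n, (j' : ℕ) < (k : ℕ) → P.c j' ≠ P'.c j)))))

end MixedPattern

/-- A state `(P, g)` (mixed pattern with glued-crease marks) can be completely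
folded by valid all-layers simple folds; glued creases can never be folded. -/
inductive GCompletelyFoldable : (P : MixedPattern) → (Fin P.n → Bool) → Prop
  | nil (P : MixedPattern) (g : Fin P.n → Bool) (h : P.n = 0) :
      GCompletelyFoldable P g
  | fold (P : MixedPattern) (g : Fin P.n → Bool) (k : Fin P.n)
      (P' : MixedPattern) (g' : Fin P'.n → Bool)
      (hv : P.ValidFold k) (hr : P.GFoldResult g k P' g')
      (h' : GCompletelyFoldable P' g') : GCompletelyFoldable P g

/-!
After the fold at `k`, the crease `q` sits inside the glued overlap and has no mirror crease to
merge with, so it is glued to flat paper. A glued crease can never be the crease of a fold, and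
every fold carries glued creases of the old state to glued creases of the new one; hence a
state with a glued crease never reaches the crease-free pattern.
-/

namespace MixedPattern

variable {P : MixedPattern} {g : Fin P.n → Bool} {k : Fin P.n}
  {P' : MixedPattern} {g' : Fin P'.n → Bool}

theorem GFoldResult.exists_glued_of_glued (hr : P.GFoldResult g k P' g') {j : Fin P.n}
    (hj : g j = true) : ∃ j', g' j' = true := by
  obtain ⟨hgk, ⟨-, -, hkeep, hrefl, -, hglue⟩ | ⟨hle, -, hkeep, hrefl, -, hglue⟩⟩ := hr
  all_goals
    have hne : j ≠ k := by rintro rfl; simp [hj] at hgk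
    rcases hne.lt_or_gt with hjk | hkj
  · obtain ⟨j', hj'⟩ := hrefl j hjk
    exact ⟨j', (hglue j').mpr (Or.inr ⟨j, hjk, hj', Or.inl hj⟩)⟩
  · obtain ⟨j', hj'⟩ := hkeep j hkj
    exact ⟨j', (hglue j').mpr (Or.inl ⟨j, hkj, hj', Or.inl hj⟩)⟩
  · obtain ⟨j', hj'⟩ := hkeep j hjk
    exact ⟨j', (hglue j').mpr (Or.inl ⟨j, hjk, hj', Or.inl hj⟩)⟩
  · obtain ⟨j', hj'⟩ := hrefl j hkj (by linarith [P.lt_len j])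
    exact ⟨j', (hglue j').mpr (Or.inr ⟨j, hkj, hj', Or.inl hj⟩)⟩

theorem GFoldResult.exists_glued_of_mirror_not_crease (hr : P.GFoldResult g k P' g')
    {q : Fin P.n} (hoverlap : |P.c q - P.c k| < P.distToEnd k)
    (hnoncrease : ∀ j : Fin P.n, P.c j ≠ 2 * P.c k - P.c q) : ∃ j, g' j = true := by
  have hne : q ≠ k := by rintro rfl; exact hnoncrease q (by ring)
  obtain ⟨hd_left, hd_right⟩ := le_min_iff.mp (le_refl (P.distToEnd k))
  obtain ⟨hlo, hhi⟩ := abs_sub_lt_iff.mp hoverlap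
  obtain ⟨-, ⟨-, -, hkeep, hrefl, -, hglue⟩ | ⟨-, -, hkeep, hrefl, -, hglue⟩⟩ := hr
  all_goals rcases hne.lt_or_gt with hqk | hkq
  · obtain ⟨j, hj⟩ := hrefl q hqk
    refine ⟨j, (hglue j).mpr (Or.inr ⟨q, hqk, hj, Or.inr fun i _ hi => ?_⟩)⟩
    exact hnoncrease i (by linarith)
  · obtain ⟨j, hj⟩ := hkeep q hkq
    refine ⟨j, (hglue j).mpr (Or.inl ⟨q, hkq, hj, Or.inr ⟨by linarith, fun i _ hi => ?_⟩⟩)⟩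
    exact hnoncrease i (by linarith)
  · obtain ⟨j, hj⟩ := hkeep q hqk
    refine ⟨j, (hglue j).mpr (Or.inl ⟨q, hqk, hj, Or.inr ⟨by linarith, fun i _ hi => ?_⟩⟩)⟩
    exact hnoncrease i (by linarith)
  · obtain ⟨j, hj⟩ := hrefl q hkq (by linarith)
    refine ⟨j, (hglue j).mpr (Or.inr ⟨q, hkq, hj, Or.inr fun i _ hi => ?_⟩)⟩
    exact hnoncrease i (by linarith)

end MixedPattern

theorem GCompletelyFoldable.not_exists_glued {P : MixedPattern} {g : Fin P.n → Bool}
    (h : GCompletelyFoldable P g) : ¬ ∃ j, g j = true := by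
  induction h with
  | nil _ _ h => exact fun ⟨j, _⟩ => (h ▸ j).elim0
  | fold _ _ _ _ _ _ hr _ ih => exact fun ⟨j, hj⟩ => ih (hr.exists_glued_of_glued hj)

theorem fold_onto_flat_point_unfoldable_general (P : MixedPattern) (k q : Fin P.n)
    (hoverlap : |P.c q - P.c k| < P.distToEnd k)
    (hnoncrease : ∀ j : Fin P.n, P.c j ≠ 2 * P.c k - P.c q)
    (P' : MixedPattern) (g' : Fin P'.n → Bool)
    (hr : P.GFoldResult (fun _ => false) k P' g') :
    ¬ GCompletelyFoldable P' g' := fun h =>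
  h.not_exists_glued (hr.exists_glued_of_mirror_not_crease hoverlap hnoncrease)

/-- In the all-layers model (where layers, once in contact,
are glued), a fold that lands a crease on a non-vertex interior point of the
paper makes the pattern unfoldable: if the all-layers fold of the pristine
pattern `P` at crease `k` sends some other crease `q` (in the overlap region)
to a point strictly interior to the remaining paper that is not a crease, then
no subsequent sequence of all-layers folds can fold `q` — the resulting state
admits no complete folding. -/
theorem fold_onto_flat_point_unfoldable (P : MixedPattern) (k q : Fin P.n)
    (hq : q ≠ k)
    (hoverlap : |P.c q - P.c k| < P.distToEnd k)
    (hnoncrease : ∀ j : Fin P.n, P.c j ≠ 2 * P.c k - P.c q)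
    (P' : MixedPattern) (g' : Fin P'.n → Bool)
    (hr : P.GFoldResult (fun _ => false) k P' g') :
    ¬ GCompletelyFoldable P' g' :=
  fold_onto_flat_point_unfoldable_general P k q hoverlap hnoncrease P' g' hr
end
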